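/- Consider the personalized bi-valued instance with two agents and four goods g_1, g_2, g_3, g_4, where agent 1's values for (g_1, g_2, g_3, g_4) are (50, 50, 1, 1) and agent 2's values are (3, 1, 1, 1), with additive utilities. The allocation X* = (X_1, X_2) with X_1 = {g_2} and X_2 = {g_1, g_3, g_4} is the unique allocation maximizing the Nash welfare, and X* is not EFX. Consequently, every Nash-welfare-maximizing allocation of this instance fails to be EFX, so for personalized bi-valued instances a maximum Nash welfare allocation need not be EFX. -/

import Mathlib

/-!
In an allocation agent 2 receives the complement of agent 1's bundle `S`, so the Nash welfare
is `v₁(S) · (6 - v₂(S))`; among the 16 bundles this attains its maximum `250` only at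
`S = {g₂}`. In `X*` agent 1 values `X₂ \ {g₃} = {g₁, g₄}` at `51 > 50`, so `X*` is not EFX,
and by uniqueness neither is any Nash-welfare-maximizing allocation.
-/

open Finset

/-- Additive utility of a bundle: the sum of the values of the single goods in it. -/
def util (u : Fin 2 → Fin 4 → ℝ) (i : Fin 2) (S : Finset (Fin 4)) : ℝ :=
  ∑ g ∈ S, u i g

/-- `X` is an allocation: a partition of the four goods into two (possibly empty) bundles. -/
def IsAllocation (X : Fin 2 → Finset (Fin 4)) : Prop :=
  (∀ g : Fin 4, ∃ i, g ∈ X i) ∧ ∀ i j : Fin 2, i ≠ j → Disjoint (X i) (X j)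

/-- `X` is EFX w.r.t. utilities `u`. -/
def IsEFX (u : Fin 2 → Fin 4 → ℝ) (X : Fin 2 → Finset (Fin 4)) : Prop :=
  ∀ i j : Fin 2, ∀ g ∈ X j, util u i ((X j).erase g) ≤ util u i (X i)

/-- The Nash welfare of a two-agent allocation: the product of the two agents' utilities. -/
def nashWelfare (u : Fin 2 → Fin 4 → ℝ) (X : Fin 2 → Finset (Fin 4)) : ℝ :=
  util u 0 (X 0) * util u 1 (X 1)

/-- Agent 1's values for the goods `(g₁, g₂, g₃, g₄)` are `(50, 50, 1, 1)` and agent 2's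
values are `(3, 1, 1, 1)`. -/
def uMNW : Fin 2 → Fin 4 → ℝ := ![![50, 50, 1, 1], ![3, 1, 1, 1]]

/-- The allocation `X* = ({g₂}, {g₁, g₃, g₄})`. -/
def Xstar : Fin 2 → Finset (Fin 4) := ![{1}, {0, 2, 3}]

theorem isAllocation_iff_eq_compl {X : Fin 2 → Finset (Fin 4)} :
    IsAllocation X ↔ X 1 = (X 0)ᶜ := by
  constructor
  · rintro ⟨hcover, hdisj⟩
    ext g
    rw [mem_compl]
    refine ⟨fun h1 h0 => disjoint_left.mp (hdisj 0 1 (by decide)) h0 h1, fun h0 => ?_⟩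
    obtain ⟨i, hi⟩ := hcover g
    fin_cases i
    · exact absurd hi h0
    · exact hi
  · intro h
    refine ⟨fun g => ?_, ?_⟩
    · by_cases hg : g ∈ X 0
      · exact ⟨0, hg⟩
      · exact ⟨1, h ▸ mem_compl.mpr hg⟩
    · simp only [Fin.forall_fin_two, h]
      exact ⟨⟨by simp, fun _ => disjoint_compl_right⟩, fun _ => disjoint_compl_left, by simp⟩

theorem isAllocation_Xstar : IsAllocation Xstar := isAllocation_iff_eq_compl.mpr (by decide)

theorem util_compl (u : Fin 2 → Fin 4 → ℝ) (i : Fin 2) (S : Finset (Fin 4)) :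
    util u i Sᶜ = util u i univ - util u i S :=
  eq_sub_of_add_eq (sum_compl_add_sum S (u i))

theorem nashWelfare_of_isAllocation {u : Fin 2 → Fin 4 → ℝ} {X : Fin 2 → Finset (Fin 4)}
    (hX : IsAllocation X) :
    nashWelfare u X = util u 0 (X 0) * (util u 1 univ - util u 1 (X 0)) := by
  rw [nashWelfare, isAllocation_iff_eq_compl.mp hX, util_compl]

theorem util_uMNW_one_univ : util uMNW 1 univ = 6 := by
  norm_num [util, uMNW, Fin.sum_univ_four, Matrix.cons_val_two, Matrix.cons_val_three]

theorem util_uMNW_mul_lt_of_ne (S : Finset (Fin 4)) (hS : S ≠ {1}) :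
    util uMNW 0 S * (6 - util uMNW 1 S) < 250 := by
  fin_cases S <;> first | exact absurd rfl hS | norm_num [util, uMNW]

theorem nashWelfare_uMNW_Xstar : nashWelfare uMNW Xstar = 250 := by
  rw [nashWelfare_of_isAllocation isAllocation_Xstar, util_uMNW_one_univ]
  norm_num [util, uMNW, Xstar]

theorem nashWelfare_uMNW_lt_Xstar {X : Fin 2 → Finset (Fin 4)} (hX : IsAllocation X)
    (hne : X ≠ Xstar) :
    nashWelfare uMNW X < nashWelfare uMNW Xstar := by
  have h0 : X 0 ≠ {1} := fun h0 => hne <| funext <| Fin.forall_fin_two.mpr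
    ⟨h0, by rw [isAllocation_iff_eq_compl.mp hX, h0]; decide⟩
  rw [nashWelfare_uMNW_Xstar, nashWelfare_of_isAllocation hX, util_uMNW_one_univ]
  exact util_uMNW_mul_lt_of_ne (X 0) h0

theorem not_isEFX_Xstar : ¬ IsEFX uMNW Xstar := by
  intro h
  have envy := h 0 1 2 (by decide)
  rw [show (Xstar 1).erase 2 = {0, 3} by decide, util, util, sum_pair (by decide)] at envy
  norm_num [uMNW, Xstar, Matrix.cons_val_three] at envy

theorem not_isEFX_of_forall_nashWelfare_lt {u : Fin 2 → Fin 4 → ℝ}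
    {Xs X : Fin 2 → Finset (Fin 4)} (hXs : IsAllocation Xs)
    (hlt : ∀ Y, IsAllocation Y → Y ≠ Xs → nashWelfare u Y < nashWelfare u Xs)
    (hXsEFX : ¬ IsEFX u Xs) (hX : IsAllocation X)
    (hmax : ∀ Y, IsAllocation Y → nashWelfare u Y ≤ nashWelfare u X) : ¬ IsEFX u X := by
  obtain rfl : X = Xs := by_contra fun hne => (hmax Xs hXs).not_gt (hlt X hX hne)
  exact hXsEFX

/-- In the instance where agent 1's values are `(50, 50, 1, 1)` and agent
2's values are `(3, 1, 1, 1)`, the allocation `X* = ({g₂}, {g₁, g₃, g₄})` is the unique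
Nash-welfare-maximizing allocation, and `X*` is not EFX; consequently every
Nash-welfare-maximizing allocation of this instance fails to be EFX. -/
theorem mnw_not_EFX_personalized_bivalued :
    (∀ X : Fin 2 → Finset (Fin 4), IsAllocation X →
      nashWelfare uMNW X ≤ nashWelfare uMNW Xstar) ∧
    (∀ X : Fin 2 → Finset (Fin 4), IsAllocation X →
      nashWelfare uMNW X = nashWelfare uMNW Xstar → X = Xstar) ∧
    ¬ IsEFX uMNW Xstar ∧
    (∀ X : Fin 2 → Finset (Fin 4), IsAllocation X →
      (∀ Y : Fin 2 → Finset (Fin 4), IsAllocation Y →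
        nashWelfare uMNW Y ≤ nashWelfare uMNW X) →
      ¬ IsEFX uMNW X) := by
  refine ⟨fun X hX => ?_, fun X hX heq => ?_, not_isEFX_Xstar, fun X hX hmax =>
    not_isEFX_of_forall_nashWelfare_lt isAllocation_Xstar
      (fun _ hY => nashWelfare_uMNW_lt_Xstar hY) not_isEFX_Xstar hX hmax⟩
  · rcases eq_or_ne X Xstar with rfl | hne
    · exact le_rfl
    · exact (nashWelfare_uMNW_lt_Xstar hX hne).le
  · by_contra hne
    exact (nashWelfare_uMNW_lt_Xstar hX hne).ne heq
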